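/- Local confluence of the substitution subcalculus: if a well-formed suspension expression s rewrites in one step by a reading or merging rule to u, and in one step to v, then there exists an expression t such that u rewrites to t and v rewrites to t by finitely many reading and merging steps. -/

import Mathlib

/- Terms of the suspension calculus: constants, de Bruijn indices `#i`,
applications, abstractions, and suspensions `[t, ol, nl, e]`. -/
mutual
inductive Tm : Type where
  | const : Nat → Tm
  | idx : Nat → Tm
  | app : Tm → Tm → Tm
  | lam : Tm → Tm
  | susp : Tm → Nat → Nat → Env → Tm
/-- Environments: `nil`, cons cells `(t,n)::e`, and merges `{e1, nl1, ol2, e2}`. -/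
inductive Env : Type where
  | nil : Env
  | econs : Tm → Nat → Env → Env
  | merge : Env → Nat → Nat → Env → Env
end

/-- Length of an environment. -/
def Env.len : Env → Nat
  | .nil => 0
  | .econs _ _ e => 1 + Env.len e
  | .merge e1 nl1 _ e2 => Env.len e1 + (Env.len e2 - nl1)

/-- Level of an environment. -/
def Env.lev : Env → Nat
  | .nil => 0
  | .econs _ l _ => l
  | .merge _ nl1 ol2 e2 => Env.lev e2 + (nl1 - ol2)

/- Well-formedness of suspension expressions. -/
mutual
inductive WfTm : Tm → Prop where
  | const : ∀ c, WfTm (.const c)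
  | idx : ∀ i, 1 ≤ i → WfTm (.idx i)
  | app : ∀ {t1 t2}, WfTm t1 → WfTm t2 → WfTm (.app t1 t2)
  | lam : ∀ {t}, WfTm t → WfTm (.lam t)
  | susp : ∀ {t e} (ol nl : Nat), WfTm t → WfEnv e → Env.len e = ol →
      Env.lev e ≤ nl → WfTm (.susp t ol nl e)
inductive WfEnv : Env → Prop where
  | nil : WfEnv .nil
  | econs : ∀ {t e} (l : Nat), WfTm t → WfEnv e → Env.lev e ≤ l → WfEnv (.econs t l e)
  | merge : ∀ {e1 e2} (nl1 ol2 : Nat), WfEnv e1 → WfEnv e2 → Env.lev e1 ≤ nl1 →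
      Env.len e2 = ol2 → WfEnv (.merge e1 nl1 ol2 e2)
end

/- One-step rewriting by the reading rules (r1)-(r6) and merging rules
(m1)-(m6), applied at any subexpression. -/
mutual
inductive SR : Tm → Tm → Prop where
  | r1 : ∀ c ol nl e, SR (.susp (.const c) ol nl e) (.const c)
  | r2 : ∀ i nl, 1 ≤ i → SR (.susp (.idx i) 0 nl .nil) (.idx (i + nl))
  | r3 : ∀ ol nl t l e, SR (.susp (.idx 1) ol nl (.econs t l e)) (.susp t 0 (nl - l) .nil)
  | r4 : ∀ i ol nl t l e, 1 < i →
      SR (.susp (.idx i) ol nl (.econs t l e)) (.susp (.idx (i - 1)) (ol - 1) nl e)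
  | r5 : ∀ t1 t2 ol nl e,
      SR (.susp (.app t1 t2) ol nl e) (.app (.susp t1 ol nl e) (.susp t2 ol nl e))
  | r6 : ∀ t ol nl e,
      SR (.susp (.lam t) ol nl e)
         (.lam (.susp t (ol + 1) (nl + 1) (.econs (.idx 1) (nl + 1) e)))
  | m1 : ∀ t ol1 nl1 e1 ol2 nl2 e2,
      SR (.susp (.susp t ol1 nl1 e1) ol2 nl2 e2)
         (.susp t (ol1 + (ol2 - nl1)) (nl2 + (nl1 - ol2)) (.merge e1 nl1 ol2 e2))
  | appL : ∀ {t1 t1'} (t2 : Tm), SR t1 t1' → SR (.app t1 t2) (.app t1' t2)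
  | appR : ∀ (t1 : Tm) {t2 t2'}, SR t2 t2' → SR (.app t1 t2) (.app t1 t2')
  | lamC : ∀ {t t'}, SR t t' → SR (.lam t) (.lam t')
  | suspT : ∀ {t t'} ol nl e, SR t t' → SR (.susp t ol nl e) (.susp t' ol nl e)
  | suspE : ∀ t ol nl {e e'}, SRE e e' → SR (.susp t ol nl e) (.susp t ol nl e')
inductive SRE : Env → Env → Prop where
  | m2 : ∀ e1 nl1, SRE (.merge e1 nl1 0 .nil) e1
  | m3 : ∀ ol2 e2, SRE (.merge .nil 0 ol2 e2) e2
  | m4 : ∀ nl1 ol2 t l e2, 1 ≤ nl1 →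
      SRE (.merge .nil nl1 ol2 (.econs t l e2)) (.merge .nil (nl1 - 1) (ol2 - 1) e2)
  | m5 : ∀ t n e1 nl1 ol2 s l e2, n < nl1 →
      SRE (.merge (.econs t n e1) nl1 ol2 (.econs s l e2))
          (.merge (.econs t n e1) (nl1 - 1) (ol2 - 1) e2)
  | m6 : ∀ t n e1 ol2 s l e2,
      SRE (.merge (.econs t n e1) n ol2 (.econs s l e2))
          (.econs (.susp t ol2 l (.econs s l e2)) (l + (n - ol2))
                  (.merge e1 n ol2 (.econs s l e2)))
  | consT : ∀ {t t'} l e, SR t t' → SRE (.econs t l e) (.econs t' l e)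
  | consE : ∀ t l {e e'}, SRE e e' → SRE (.econs t l e) (.econs t l e')
  | mergeL : ∀ {e1 e1'} nl1 ol2 e2, SRE e1 e1' →
      SRE (.merge e1 nl1 ol2 e2) (.merge e1' nl1 ol2 e2)
  | mergeR : ∀ e1 nl1 ol2 {e2 e2'}, SRE e2 e2' →
      SRE (.merge e1 nl1 ol2 e2) (.merge e1 nl1 ol2 e2')
end

/-!
Every well-formed expression rm-reduces to a suspension-free normal form, which `Tm.nf` and
`Env.nf` compute directly: a suspension is evaluated by the meta-level substitution `Tm.subst`
and a merge of environments by the meta-level `ListEnv.merge`. A rewriting step does not change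
this normal form, so both one-step reducts of `s` rewrite to the normal form of `s`. The only
rule for which invariance is not a matter of unfolding is (m1): there it is the substitution
lemma `Tm.subst_subst`, saying that two successive substitutions are one substitution by the
merged environment.
-/

/-- Termination measure for `Tm.subst`: an abstraction outweighs the entry `(#1, ·)` that
crossing it pushes on the environment. -/
def Tm.size : Tm → ℕ
  | .app a b => a.size + b.size + 1
  | .lam a => a.size + 2
  | _ => 0

/-- The rm-normal forms of well-formed terms. -/
inductive Tm.IsPure : Tm → Prop
  | const (c : ℕ) : IsPure (.const c)
  | idx {i : ℕ} : 1 ≤ i → IsPure (.idx i)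
  | app {a b : Tm} : IsPure a → IsPure b → IsPure (.app a b)
  | lam {a : Tm} : IsPure a → IsPure (.lam a)

abbrev ListEnv := List (Tm × ℕ)

namespace ListEnv

def weight (E : ListEnv) : ℕ := (E.map fun x => x.1.size + 1).sum

def lev : ListEnv → ℕ
  | [] => 0
  | (_, l) :: _ => l

def Ordered : ListEnv → Prop
  | [] => True
  | (_, l) :: E => lev E ≤ l ∧ Ordered E

def Pure (E : ListEnv) : Prop := ∀ x ∈ E, x.1.IsPure

@[simp] theorem lev_nil : lev [] = 0 := rfl
@[simp] theorem lev_cons (x : Tm × ℕ) (E : ListEnv) : lev (x :: E) = x.2 := rfl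
@[simp] theorem ordered_nil : Ordered [] := trivial
@[simp] theorem ordered_cons (t : Tm) (l : ℕ) (E : ListEnv) :
    Ordered ((t, l) :: E) ↔ lev E ≤ l ∧ Ordered E := Iff.rfl
@[simp] theorem pure_nil : Pure [] := by simp [Pure]
@[simp] theorem pure_cons (t : Tm) (l : ℕ) (E : ListEnv) :
    Pure ((t, l) :: E) ↔ t.IsPure ∧ Pure E := by
  simp [Pure]

theorem Ordered.drop : ∀ {E : ListEnv} (d : ℕ), Ordered E → Ordered (E.drop d)
  | [], _, _ => by simp
  | _ :: _, 0, h => h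
  | (_, _) :: _, d + 1, h => Ordered.drop d h.2

theorem lev_drop_le : ∀ {E : ListEnv} (d : ℕ), Ordered E → lev (E.drop d) ≤ lev E
  | [], _, _ => by simp
  | _ :: _, 0, _ => le_rfl
  | (_, _) :: _, d + 1, h => (lev_drop_le d h.2).trans h.1

theorem Pure.drop {E : ListEnv} (d : ℕ) (h : Pure E) : Pure (E.drop d) :=
  fun x hx => h x (List.mem_of_mem_drop hx)

end ListEnv

open ListEnv

namespace Tm

/-- The suspension `[t, E.length, nl, E]` evaluated at the meta level, for suspension-free `t`
(suspensions are left alone). -/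
def subst : Tm → ℕ → ListEnv → Tm
  | .const c, _, _ => .const c
  | .idx i, nl, [] => .idx (i + nl)
  | .idx i, nl, (t, l) :: E => if i = 1 then subst t (nl - l) [] else subst (.idx (i - 1)) nl E
  | .app a b, nl, E => .app (subst a nl E) (subst b nl E)
  | .lam a, nl, E => .lam (subst a (nl + 1) ((.idx 1, nl + 1) :: E))
  | .susp t ol nl e, _, _ => .susp t ol nl e
termination_by t _ E => t.size + weight E
decreasing_by
  all_goals simp only [size, weight, List.map_cons, List.sum_cons, List.map_nil, List.sum_nil]
  all_goals omega

@[simp] theorem subst_const (c nl : ℕ) (E : ListEnv) : subst (.const c) nl E = .const c := by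
  rw [subst]
@[simp] theorem subst_idx_nil (i nl : ℕ) : subst (.idx i) nl [] = .idx (i + nl) := by
  rw [subst]
@[simp] theorem subst_idx_one_cons (nl : ℕ) (t : Tm) (l : ℕ) (E : ListEnv) :
    subst (.idx 1) nl ((t, l) :: E) = subst t (nl - l) [] := by
  rw [subst]; simp
theorem subst_idx_cons {i : ℕ} (hi : i ≠ 1) (nl : ℕ) (t : Tm) (l : ℕ) (E : ListEnv) :
    subst (.idx i) nl ((t, l) :: E) = subst (.idx (i - 1)) nl E := by
  rw [subst]; simp [hi]
@[simp] theorem subst_app (a b : Tm) (nl : ℕ) (E : ListEnv) :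
    subst (.app a b) nl E = .app (subst a nl E) (subst b nl E) := by
  rw [subst]
@[simp] theorem subst_lam (a : Tm) (nl : ℕ) (E : ListEnv) :
    subst (.lam a) nl E = .lam (subst a (nl + 1) ((.idx 1, nl + 1) :: E)) := by
  rw [subst]

end Tm

open Tm

theorem Tm.IsPure.subst {a : Tm} (nl : ℕ) {E : ListEnv} :
    a.IsPure → Pure E → (a.subst nl E).IsPure := by
  induction a, nl, E using Tm.subst.induct with
  | case1 => intros; simpa using IsPure.const _
  | case2 i nl => rintro ⟨⟩ -; simp only [subst_idx_nil]; exact IsPure.idx (by omega)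
  | case3 nl t l E ih =>
    intro _ hE
    rw [subst_idx_one_cons]
    exact ih ((pure_cons _ _ _).1 hE).1 pure_nil
  | case4 i nl t l E hi ih =>
    rintro ⟨⟩ hE
    rw [subst_idx_cons hi]
    exact ih (IsPure.idx (by omega)) ((pure_cons _ _ _).1 hE).2
  | case5 a b nl E iha ihb =>
    rintro ⟨⟩ hE
    rw [subst_app]
    exact IsPure.app (iha ‹_› hE) (ihb ‹_› hE)
  | case6 a nl E ih =>
    rintro ⟨⟩ hE
    rw [subst_lam]
    exact IsPure.lam (ih ‹_› ((pure_cons _ _ _).2 ⟨IsPure.idx le_rfl, hE⟩))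
  | case7 => rintro ⟨⟩

/-- The entries `(#1, m + p), …, (#1, m + 1)` that `p` uses of (r6) push on an environment
of level `m`. -/
def ListEnv.ids (m : ℕ) : ℕ → ListEnv
  | 0 => []
  | p + 1 => (.idx 1, m + p + 1) :: ids m p

@[simp] theorem ListEnv.ids_zero (m : ℕ) : ids m 0 = [] := rfl

namespace Tm

theorem subst_idx_ids_append_of_le {i p : ℕ} (hi : 1 ≤ i) (hip : i ≤ p) (m d : ℕ)
    (E : ListEnv) : subst (.idx i) (m + p + d) (ids m p ++ E) = .idx (i + d) := by
  induction p generalizing i d with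
  | zero => omega
  | succ p ih =>
    by_cases hi1 : i = 1
    · subst hi1
      simp only [ids, List.cons_append, subst_idx_one_cons, subst_idx_nil]
      congr 1
      omega
    · rw [ids, List.cons_append, subst_idx_cons hi1,
        show m + (p + 1) + d = m + p + (d + 1) by omega, ih (by omega) (by omega)]
      congr 1
      omega

theorem subst_idx_ids_append_of_lt {i p : ℕ} (hip : p < i) (m nl : ℕ) (E : ListEnv) :
    subst (.idx i) nl (ids m p ++ E) = subst (.idx (i - p)) nl E := by
  induction p generalizing i with
  | zero => rfl
  | succ p ih =>
    rw [ids, List.cons_append, subst_idx_cons (by omega), ih (by omega)]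
    congr 2
    omega

theorem subst_subst_idx_nil_ids {j p M : ℕ} (hj : 1 ≤ j) (hpM : p ≤ M) (k : ℕ) :
    subst (subst (.idx j) M []) (k + p) (ids k p) = subst (.idx j) (M + k) [] := by
  rw [subst_idx_nil, ← List.append_nil (ids k p), subst_idx_ids_append_of_lt (by omega)]
  simp only [subst_idx_nil]
  congr 1
  omega

/-- The index case is a hypothesis because the entries of `E` are not subterms of `t`: it is
`subst_subst_idx_ids`, which in turn needs the case `E = []` of this lemma. The slack `p` is
needed there, since an entry at level `l` is itself shifted by `M - l ≥ p`. -/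
theorem subst_subst_ids {E : ListEnv} {k : ℕ}
    (hidx : ∀ j M p, 1 ≤ j → lev E + p ≤ M →
      subst (subst (.idx j) M E) (k + p) (ids k p) = subst (.idx j) (M + k) E)
    {t : Tm} (ht : t.IsPure) {M p : ℕ} (hpM : lev E + p ≤ M) (q : ℕ) :
    subst (subst t (M + q) (ids M q ++ E)) (k + p + q) (ids k (p + q))
      = subst t (M + k + q) (ids (M + k) q ++ E) := by
  induction ht generalizing q with
  | const c => simp
  | @idx i hi =>
    by_cases hiq : i ≤ q
    · have lookup (m r : ℕ) (E' : ListEnv) (hir : i ≤ r) :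
          subst (.idx i) (m + r) (ids m r ++ E') = .idx i := by
        simpa using subst_idx_ids_append_of_le hi hir m 0 E'
      rw [lookup M q E hiq, ← List.append_nil (ids k (p + q)), Nat.add_assoc k p q,
        lookup k (p + q) [] (by omega), lookup (M + k) q E hiq]
    · rw [subst_idx_ids_append_of_lt (by omega), subst_idx_ids_append_of_lt (by omega),
        Nat.add_assoc k p q, hidx _ _ _ (by omega) (by omega)]
      congr 1
      omega
  | app _ _ iha ihb => simp [iha, ihb]
  | lam _ ih =>
    simpa [ids, Nat.add_assoc] using ih (q + 1)

theorem subst_subst_nil_ids {t : Tm} (ht : t.IsPure) {p M : ℕ} (hpM : p ≤ M) (k : ℕ) :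
    subst (subst t M []) (k + p) (ids k p) = subst t (M + k) [] := by
  simpa using subst_subst_ids (E := [])
    (fun _ _ _ hj hpM => subst_subst_idx_nil_ids hj (by simpa using hpM) k) ht
    (by simpa using hpM) 0

theorem subst_subst_idx_ids : ∀ {E : ListEnv}, Pure E → Ordered E → ∀ {j M p : ℕ} (k : ℕ),
    1 ≤ j → lev E + p ≤ M →
    subst (subst (.idx j) M E) (k + p) (ids k p) = subst (.idx j) (M + k) E
  | [], _, _, _, _, _, k, hj, hpM => subst_subst_idx_nil_ids hj (by simpa using hpM) k
  | (t, l) :: E, hpure, hord, j, M, p, k, hj, hpM => by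
    simp only [lev_cons] at hpM
    by_cases hj1 : j = 1
    · subst hj1
      rw [subst_idx_one_cons, subst_idx_one_cons,
        subst_subst_nil_ids ((pure_cons _ _ _).1 hpure).1 (by omega : p ≤ M - l)]
      congr 1
      omega
    · have := hord.1
      rw [subst_idx_cons hj1, subst_idx_cons hj1]
      exact subst_subst_idx_ids ((pure_cons _ _ _).1 hpure).2 hord.2 k (by omega)
        (by omega)

theorem subst_subst_nil {t : Tm} (ht : t.IsPure) {E : ListEnv} (hpure : Pure E)
    (hord : Ordered E) {nl : ℕ} (hnl : lev E ≤ nl) (k : ℕ) :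
    subst (subst t nl E) k [] = subst t (nl + k) E := by
  simpa using subst_subst_ids
    (fun _ _ _ hj hpM => subst_subst_idx_ids hpure hord k hj hpM) ht (p := 0) hnl 0

end Tm

namespace ListEnv

/-- The meta-level merge `{E1, nl1, ol2, E2}`, computed by the rules (m2)-(m6). -/
def merge : ListEnv → ℕ → ℕ → ListEnv → ListEnv
  | E1, _, _, [] => E1
  | [], 0, _, E2 => E2
  | [], n + 1, o, _ :: E2 => merge [] n (o - 1) E2
  | (t, n) :: E1, nl1, o, (s, l) :: E2 =>
      if n = nl1 then (t.subst l ((s, l) :: E2), l + (n - o)) :: merge E1 nl1 o ((s, l) :: E2)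
      else merge ((t, n) :: E1) (nl1 - 1) (o - 1) E2
termination_by E1 _ _ E2 => E1.length + E2.length

@[simp] theorem merge_nil_right (E1 : ListEnv) (n o : ℕ) : merge E1 n o [] = E1 := by
  cases E1 <;> cases n <;> rw [merge]

theorem merge_nil_zero (o : ℕ) (E2 : ListEnv) : merge [] 0 o E2 = E2 := by
  cases E2 <;> rw [merge]; simp

theorem merge_cons_cons_self (t : Tm) (n : ℕ) (E1 : ListEnv) (o : ℕ) (s : Tm) (l : ℕ)
    (E2 : ListEnv) : merge ((t, n) :: E1) n o ((s, l) :: E2)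
      = (t.subst l ((s, l) :: E2), l + (n - o)) :: merge E1 n o ((s, l) :: E2) := by
  rw [merge]; simp

theorem merge_cons_cons_of_ne {n nl1 : ℕ} (h : n ≠ nl1) (t : Tm) (E1 : ListEnv) (o : ℕ) (s : Tm)
    (l : ℕ) (E2 : ListEnv) : merge ((t, n) :: E1) nl1 o ((s, l) :: E2)
      = merge ((t, n) :: E1) (nl1 - 1) (o - 1) E2 := by
  rw [merge]; simp [h]

theorem merge_cons_right_of_lev_lt {E1 : ListEnv} {n : ℕ} (h : lev E1 < n) (o : ℕ)
    (x : Tm × ℕ) (E2 : ListEnv) : merge E1 n o (x :: E2) = merge E1 (n - 1) (o - 1) E2 := by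
  obtain ⟨s, l⟩ := x
  match E1, n with
  | [], n + 1 => rw [merge]; rfl
  | (t, m) :: E1, n => exact merge_cons_cons_of_ne (by simp only [lev_cons] at h; omega) ..

theorem merge_add_of_lev_le {E1 : ListEnv} {n : ℕ} (h : lev E1 ≤ n) (d o : ℕ) (E2 : ListEnv) :
    merge E1 (n + d) o E2 = merge E1 n (o - d) (E2.drop d) := by
  induction d generalizing o E2 with
  | zero => rfl
  | succ d ih =>
    cases E2 with
    | nil => simp
    | cons x E2 =>
      rw [merge_cons_right_of_lev_lt (by omega), show n + (d + 1) - 1 = n + d by omega, ih,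
        List.drop_succ_cons]
      congr 1
      omega

theorem merge_nil_left (n o : ℕ) (E2 : ListEnv) : merge [] n o E2 = E2.drop n := by
  simpa [merge_nil_zero] using merge_add_of_lev_le (E1 := []) (n := 0) le_rfl n o E2

theorem Pure.merge {E1 E2 : ListEnv} (n o : ℕ) : Pure E1 → Pure E2 → Pure (merge E1 n o E2) := by
  induction E1, n, o, E2 using merge.induct with
  | case1 => intros; simpa
  | case2 E2 => intros; rwa [merge_nil_zero]
  | case3 n o x E2 ih =>
    intro _ h2
    rw [merge_nil_left]
    exact h2.drop _
  | case4 t E1 n o s l E2 ih =>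
    intro h1 h2
    rw [merge_cons_cons_self, pure_cons]
    exact ⟨((pure_cons _ _ _).1 h1).1.subst _ h2, ih ((pure_cons _ _ _).1 h1).2 h2⟩
  | case5 t n E1 nl1 o s l E2 h ih =>
    intro h1 h2
    rw [merge_cons_cons_of_ne h]
    exact ih h1 ((pure_cons _ _ _).1 h2).2

theorem length_merge {E1 E2 : ListEnv} {n : ℕ} (o : ℕ) :
    Ordered E1 → lev E1 ≤ n → (merge E1 n o E2).length = E1.length + (E2.length - n) := by
  induction E1, n, o, E2 using merge.induct with
  | case1 => intros; simp
  | case2 E2 => intros; simp [merge_nil_zero]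
  | case3 n o x E2 ih => intros; simp [merge_nil_left]
  | case4 t E1 n o s l E2 ih =>
    intro h1 hn
    have := ih h1.2 (h1.1.trans hn)
    rw [merge_cons_cons_self]
    simp only [List.length_cons] at *
    omega
  | case5 t n E1 nl1 o s l E2 h ih =>
    intro h1 hn
    simp only [lev_cons] at hn
    have := ih h1 (by simp only [lev_cons]; omega)
    rw [merge_cons_cons_of_ne h]
    simp only [List.length_cons] at *
    omega

theorem lev_merge_le {E1 E2 : ListEnv} {n o : ℕ} :
    Ordered E2 → lev E1 ≤ n → E2.length = o → lev (merge E1 n o E2) ≤ lev E2 + (n - o) := by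
  induction E1, n, o, E2 using merge.induct with
  | case1 => rintro - hn rfl; simpa using hn
  | case2 E2 => intros; simp [merge_nil_zero]
  | case3 n o x E2 ih =>
    intro h2 _ _
    obtain ⟨s, l⟩ := x
    rw [merge_nil_left, List.drop_succ_cons, lev_cons]
    exact ((lev_drop_le n h2.2).trans h2.1).trans (Nat.le_add_right _ _)
  | case4 t E1 n o s l E2 ih => intros; simp [merge_cons_cons_self]
  | case5 t n E1 nl1 o s l E2 h ih =>
    intro h2 hn ho
    simp only [lev_cons, List.length_cons] at hn ho
    have := ih h2.2 (by simp only [lev_cons]; omega) (by omega)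
    have := h2.1
    rw [merge_cons_cons_of_ne h]
    simp only [lev_cons] at *
    omega

theorem Ordered.merge {E1 E2 : ListEnv} {n o : ℕ} :
    Ordered E1 → Ordered E2 → lev E1 ≤ n → E2.length = o → Ordered (merge E1 n o E2) := by
  induction E1, n, o, E2 using merge.induct with
  | case1 => intros; simpa
  | case2 E2 => intros; rwa [merge_nil_zero]
  | case3 n o x E2 ih =>
    intro _ h2 _ _
    obtain ⟨s, l⟩ := x
    rw [merge_nil_left, List.drop_succ_cons]
    exact h2.2.drop n
  | case4 t E1 n o s l E2 ih =>
    intro h1 h2 hn ho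
    rw [merge_cons_cons_self, ordered_cons]
    refine ⟨?_, ih h1.2 h2 (h1.1.trans hn) ho⟩
    simpa using lev_merge_le h2 (h1.1.trans hn) ho
  | case5 t n E1 nl1 o s l E2 h ih =>
    intro h1 h2 hn ho
    simp only [lev_cons, List.length_cons] at hn ho
    rw [merge_cons_cons_of_ne h]
    exact ih h1 h2.2 (by simp only [lev_cons]; omega) (by omega)

end ListEnv

namespace Tm

theorem subst_idx_add {i : ℕ} (hi : 1 ≤ i) (nl : ℕ) :
    ∀ (n : ℕ) (E : ListEnv),
      subst (.idx (i + n)) nl E = subst (.idx i) (nl + (n - E.length)) (E.drop n)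
  | n, [] => by simp only [subst_idx_nil, List.drop_nil, List.length_nil]; congr 1; omega
  | 0, _ :: _ => by simp
  | n + 1, (t, l) :: E => by
    rw [subst_idx_cons (by omega), show i + (n + 1) - 1 = i + n by omega, subst_idx_add hi nl n E]
    simp

theorem subst_idx_one_merge_cons {t : Tm} (ht : t.IsPure) {l nl1 : ℕ} (hl : l ≤ nl1)
    (E1 : ListEnv) {nl2 : ℕ} {E2 : ListEnv} (h2p : Pure E2) (h2o : Ordered E2)
    (hl2 : lev E2 ≤ nl2) :
    subst (.idx 1) (nl2 + (nl1 - E2.length)) (merge ((t, l) :: E1) nl1 E2.length E2)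
      = subst t (nl2 + (nl1 - l - E2.length)) (E2.drop (nl1 - l)) := by
  obtain ⟨d, rfl⟩ := Nat.exists_eq_add_of_le hl
  rw [Nat.add_sub_cancel_left, merge_add_of_lev_le (E1 := (t, l) :: E1) (n := l) le_rfl]
  have hlen := List.length_drop (l := E2) (i := d)
  cases hD : E2.drop d with
  | nil =>
    rw [hD, List.length_nil] at hlen
    rw [merge_nil_right, subst_idx_one_cons]
    congr 1
    omega
  | cons x D =>
    obtain ⟨s, m⟩ := x
    rw [hD, List.length_cons] at hlen
    have hm : m ≤ lev E2 := by simpa [hD] using lev_drop_le d h2o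
    have hDp : Pure ((s, m) :: D) := hD ▸ h2p.drop d
    have hDo : Ordered ((s, m) :: D) := hD ▸ h2o.drop d
    rw [merge_cons_cons_self, subst_idx_one_cons, subst_subst_nil ht hDp hDo (nl := m) le_rfl]
    congr 1
    omega

theorem subst_idx_merge_cons {i : ℕ} (hi : i ≠ 1) (nl : ℕ) (t : Tm) {l nl1 : ℕ} (hl : l ≤ nl1)
    {E1 : ListEnv} (hE1 : lev E1 ≤ l) (o : ℕ) (E2 : ListEnv) :
    subst (.idx i) nl (merge ((t, l) :: E1) nl1 o E2)
      = subst (.idx (i - 1)) nl (merge E1 nl1 o E2) := by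
  obtain ⟨d, rfl⟩ := Nat.exists_eq_add_of_le hl
  rw [merge_add_of_lev_le hE1, merge_add_of_lev_le (E1 := (t, l) :: E1) (n := l) le_rfl]
  cases E2.drop d with
  | nil => simp only [merge_nil_right, subst_idx_cons hi]
  | cons x D =>
    obtain ⟨s, m⟩ := x
    rw [merge_cons_cons_self, subst_idx_cons hi]

theorem subst_subst {a : Tm} {nl1 : ℕ} {E1 : ListEnv} :
    a.IsPure → Pure E1 → Ordered E1 → lev E1 ≤ nl1 →
    ∀ {nl2 : ℕ} {E2 : ListEnv}, Pure E2 → Ordered E2 → lev E2 ≤ nl2 →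
    subst (subst a nl1 E1) nl2 E2
      = subst a (nl2 + (nl1 - E2.length)) (merge E1 nl1 E2.length E2) := by
  induction a, nl1, E1 using Tm.subst.induct with
  | case1 => intros; simp
  | case2 i nl1 =>
    rintro ⟨⟩ - - - nl2 E2 - - -
    rw [subst_idx_nil, merge_nil_left, subst_idx_add ‹_›]
  | case3 nl1 t l E1 ih =>
    rintro - h1p - hl1 nl2 E2 h2p h2o hl2
    have ht := ((pure_cons _ _ _).1 h1p).1
    rw [subst_idx_one_cons, ih ht pure_nil trivial (Nat.zero_le _) h2p h2o hl2, merge_nil_left,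
      subst_idx_one_merge_cons ht (l := l) hl1 E1 h2p h2o hl2]
  | case4 i nl1 t l E1 hi ih =>
    rintro ⟨⟩ h1p h1o hl1 nl2 E2 h2p h2o hl2
    rw [subst_idx_cons hi, subst_idx_merge_cons hi _ t (l := l) hl1 h1o.1,
      ih (.idx (by omega)) ((pure_cons _ _ _).1 h1p).2 h1o.2 (h1o.1.trans hl1) h2p h2o hl2]
  | case5 a b nl1 E1 iha ihb =>
    rintro ⟨⟩ h1p h1o hl1 nl2 E2 h2p h2o hl2
    simp [iha ‹_› h1p h1o hl1 h2p h2o hl2, ihb ‹_› h1p h1o hl1 h2p h2o hl2]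
  | case6 a nl1 E1 ih =>
    rintro ⟨⟩ h1p h1o hl1 nl2 E2 h2p h2o hl2
    have h := ih ‹_› ((pure_cons _ _ _).2 ⟨.idx le_rfl, h1p⟩) ⟨hl1.trans (Nat.le_succ _), h1o⟩
      le_rfl (nl2 := nl2 + 1) (E2 := (.idx 1, nl2 + 1) :: E2)
      ((pure_cons _ _ _).2 ⟨.idx le_rfl, h2p⟩) ⟨hl2.trans (Nat.le_succ _), h2o⟩ le_rfl
    rw [merge_cons_cons_self, merge_cons_right_of_lev_lt (by omega)] at h
    simp only [List.length_cons, subst_idx_one_cons, Nat.sub_self, subst_idx_nil,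
      Nat.add_sub_cancel, Nat.add_sub_add_right, Nat.add_zero, Nat.add_right_comm nl2 1] at h
    rw [subst_lam, subst_lam, subst_lam, h]
  | case7 => rintro ⟨⟩
end Tm

mutual
def Tm.nf : Tm → Tm
  | .const c => .const c
  | .idx i => .idx i
  | .app a b => .app a.nf b.nf
  | .lam a => .lam a.nf
  | .susp t _ nl e => t.nf.subst nl e.nf

def Env.nf : Env → ListEnv
  | .nil => []
  | .econs t l e => (t.nf, l) :: e.nf
  | .merge e1 nl1 ol2 e2 => merge e1.nf nl1 ol2 e2.nf
end

mutual
theorem WfTm.isPure_nf : ∀ {t : Tm}, WfTm t → t.nf.IsPure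
  | _, .const c => .const c
  | _, .idx _ h => .idx h
  | _, .app h1 h2 => .app h1.isPure_nf h2.isPure_nf
  | _, .lam h => .lam h.isPure_nf
  | _, .susp _ nl ht he _ _ => ht.isPure_nf.subst nl he.nf_wf.1

theorem WfEnv.nf_wf : ∀ {e : Env}, WfEnv e →
    Pure e.nf ∧ Ordered e.nf ∧ lev e.nf ≤ e.lev ∧ e.nf.length = e.len
  | _, .nil => by simp [Env.nf, Env.lev, Env.len]
  | _, .econs l ht he hle => by
    obtain ⟨hp, ho, hlev, hlen⟩ := he.nf_wf
    simp only [Env.nf, Env.lev, Env.len, pure_cons, ordered_cons, lev_cons, List.length_cons]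
    exact ⟨⟨ht.isPure_nf, hp⟩, ⟨hlev.trans hle, ho⟩, le_rfl, by omega⟩
  | _, .merge (e1 := e1) (e2 := e2) nl1 ol2 h1 h2 hlev hlen => by
    obtain ⟨hp1, ho1, hlev1, hlen1⟩ := h1.nf_wf
    obtain ⟨hp2, ho2, hlev2, hlen2⟩ := h2.nf_wf
    have hl1 := hlev1.trans hlev
    have ho : e2.nf.length = ol2 := hlen2.trans hlen
    have := lev_merge_le ho2 hl1 ho
    have := length_merge ol2 (E2 := e2.nf) ho1 hl1
    simp only [Env.nf, Env.lev, Env.len]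
    exact ⟨hp1.merge _ _ hp2, ho1.merge ho2 hl1 ho, by omega, by omega⟩
end

theorem SRE.len_eq : ∀ {e e' : Env}, SRE e e' → e'.len = e.len
  | _, _, .m2 _ _ | _, _, .m3 _ _ | _, _, .consT _ _ _ => by simp [Env.len]
  | _, _, .m4 _ _ _ _ _ h | _, _, .m5 _ _ _ _ _ _ _ _ h => by simp only [Env.len]; omega
  | _, _, .m6 .. => by simp only [Env.len]; omega
  | _, _, .consE _ _ h | _, _, .mergeL _ _ _ h | _, _, .mergeR _ _ _ h => by
    simp [Env.len, h.len_eq]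

theorem SRE.lev_le : ∀ {e e' : Env}, SRE e e' → WfEnv e → e'.lev ≤ e.lev
  | _, _, .m2 _ _, .merge _ _ _ _ hl _ => by simpa [Env.lev] using hl
  | _, _, .m4 _ _ _ _ _ _, .merge _ _ _ (.econs _ _ _ _) _ hn
  | _, _, .m5 _ _ _ _ _ _ _ _ _, .merge _ _ _ (.econs _ _ _ _) _ hn => by
    simp only [Env.lev, Env.len] at hn ⊢; omega
  | _, _, .mergeR _ _ _ h, .merge _ _ _ h2 _ _ => by
    have := h.lev_le h2
    simp only [Env.lev]; omega
  | _, _, .m3 .., _ | _, _, .m6 .., _ | _, _, .consT .., _ | _, _, .consE .., _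
  | _, _, .mergeL .., _ => by simp [Env.lev]

mutual
theorem SR.wfTm : ∀ {t t' : Tm}, SR t t' → WfTm t → WfTm t'
  | _, _, .r1 c _ _ _, _ => .const c
  | _, _, .r2 _ _ h, _ => .idx _ (by omega)
  | _, _, .r3 _ nl _ l _, .susp _ _ _ (.econs _ ht _ _) _ _ =>
    .susp 0 (nl - l) ht .nil rfl (Nat.zero_le _)
  | _, _, .r4 _ ol nl _ _ _ hi, .susp _ _ _ (.econs _ _ he hle) hlen hlev => by
    simp only [Env.len, Env.lev] at hlen hlev
    exact .susp (ol - 1) nl (.idx _ (by omega)) he (by omega) (by omega)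
  | _, _, .r5 .., .susp ol nl (.app h1 h2) he hlen hlev =>
    .app (.susp ol nl h1 he hlen hlev) (.susp ol nl h2 he hlen hlev)
  | _, _, .r6 .., .susp ol nl (.lam h) he hlen hlev =>
    .lam (.susp (ol + 1) (nl + 1) h (.econs (nl + 1) (.idx 1 le_rfl) he (by omega))
      (by simp [Env.len, hlen, Nat.add_comm]) le_rfl)
  | _, _, .m1 _ _ nl1 _ ol2 _ _, .susp _ _ (.susp _ _ ht1 he1 hlen1 hlev1) he hlen hlev =>
    .susp _ _ ht1 (.merge nl1 ol2 he1 he hlev1 hlen) (by simp only [Env.len]; omega)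
      (by simp only [Env.lev]; omega)
  | _, _, .appL _ h, .app h1 h2 => .app (h.wfTm h1) h2
  | _, _, .appR _ h, .app h1 h2 => .app h1 (h.wfTm h2)
  | _, _, .lamC h, .lam h1 => .lam (h.wfTm h1)
  | _, _, .suspT ol nl _ h, .susp _ _ ht he hlen hlev => .susp ol nl (h.wfTm ht) he hlen hlev
  | _, _, .suspE _ ol nl h, .susp _ _ ht he hlen hlev =>
    .susp ol nl ht (h.wfEnv he) (h.len_eq.trans hlen) ((h.lev_le he).trans hlev)

theorem SRE.wfEnv : ∀ {e e' : Env}, SRE e e' → WfEnv e → WfEnv e'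
  | _, _, .m2 .., .merge _ _ h1 _ _ _ => h1
  | _, _, .m3 .., .merge _ _ _ h2 _ _ => h2
  | _, _, .m4 .., .merge _ _ _ (.econs _ _ he _) _ hn => by
    simp only [Env.len] at hn
    exact .merge _ _ .nil he (Nat.zero_le _) (by omega)
  | _, _, .m5 .., .merge _ _ h1 (.econs _ _ he _) hl hn => by
    simp only [Env.len, Env.lev] at hn hl
    exact .merge _ _ h1 he (by simp only [Env.lev]; omega) (by omega)
  | _, _, .m6 _ _ _ ol2 _ l _, .merge _ _ (.econs _ ht1 he1 hle1) h2 _ hn =>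
    .econs _ (.susp ol2 l ht1 h2 hn le_rfl) (.merge _ _ he1 h2 hle1 hn) (by simp [Env.lev])
  | _, _, .consT l _ h, .econs _ ht he hle => .econs l (h.wfTm ht) he hle
  | _, _, .consE _ l h, .econs _ ht he hle => .econs l ht (h.wfEnv he) ((h.lev_le he).trans hle)
  | _, _, .mergeL _ _ _ h, .merge _ _ h1 h2 hl hn =>
    .merge _ _ (h.wfEnv h1) h2 ((h.lev_le h1).trans hl) hn
  | _, _, .mergeR _ _ _ h, .merge _ _ h1 h2 hl hn =>
    .merge _ _ h1 (h.wfEnv h2) hl (h.len_eq.trans hn)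
end

mutual
theorem SR.nf_eq : ∀ {t t' : Tm}, SR t t' → WfTm t → t'.nf = t.nf
  | _, _, .r1 .., _ | _, _, .r2 .., _ | _, _, .r3 .., _ | _, _, .r5 .., _ | _, _, .r6 .., _ => by
    simp [Tm.nf, Env.nf]
  | _, _, .r4 _ _ _ _ _ _ hi, _ => by simp only [Tm.nf, Env.nf]; rw [subst_idx_cons (by omega)]
  | _, _, .m1 .., .susp _ _ (.susp _ _ ht1 he1 _ hlev1) he hlen hlev => by
    obtain ⟨hp1, ho1, hlev1', -⟩ := he1.nf_wf
    obtain ⟨hp, ho, hlev', hlen'⟩ := he.nf_wf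
    simp only [Tm.nf, Env.nf]
    rw [subst_subst ht1.isPure_nf hp1 ho1 (hlev1'.trans hlev1) hp ho (hlev'.trans hlev),
      hlen', hlen]
  | _, _, .appL _ h, .app h1 _ => by simp only [Tm.nf, h.nf_eq h1]
  | _, _, .appR _ h, .app _ h2 => by simp only [Tm.nf, h.nf_eq h2]
  | _, _, .lamC h, .lam h1 => by simp only [Tm.nf, h.nf_eq h1]
  | _, _, .suspT _ _ _ h, .susp _ _ ht _ _ _ => by simp only [Tm.nf, h.nf_eq ht]
  | _, _, .suspE _ _ _ h, .susp _ _ _ he _ _ => by simp only [Tm.nf, h.nf_eq he]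

theorem SRE.nf_eq : ∀ {e e' : Env}, SRE e e' → WfEnv e → e'.nf = e.nf
  | _, _, .m2 .., _ => by simp [Env.nf]
  | _, _, .m3 .., _ => by simp [Env.nf, merge_nil_zero]
  | _, _, .m4 _ _ _ _ _ h, _ => by
    simp only [Env.nf]
    rw [merge_cons_right_of_lev_lt h]
  | _, _, .m5 _ _ _ _ _ _ _ _ h, _ => by simp only [Env.nf]; rw [merge_cons_cons_of_ne (by omega)]
  | _, _, .m6 .., _ => by simp only [Tm.nf, Env.nf]; rw [merge_cons_cons_self]
  | _, _, .consT _ _ h, .econs _ ht _ _ => by simp only [Env.nf, h.nf_eq ht]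
  | _, _, .consE _ _ h, .econs _ _ he _ => by simp only [Env.nf, h.nf_eq he]
  | _, _, .mergeL _ _ _ h, .merge _ _ h1 _ _ _ => by simp only [Env.nf, h.nf_eq h1]
  | _, _, .mergeR _ _ _ h, .merge _ _ _ h2 _ _ => by simp only [Env.nf, h.nf_eq h2]
end

open Relation

section Congruence

variable {t1 t1' t2 t2' : Tm} {e1 e1' e2 e2' : Env}

theorem reflTransGen_app (h1 : ReflTransGen SR t1 t1') (h2 : ReflTransGen SR t2 t2') :
    ReflTransGen SR (.app t1 t2) (.app t1' t2') :=
  (h1.lift (fun x => Tm.app x t2) fun _ _ => SR.appL t2).trans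
    (h2.lift (fun x => Tm.app t1' x) fun _ _ => SR.appR t1')

theorem reflTransGen_lam (h : ReflTransGen SR t1 t1') : ReflTransGen SR (.lam t1) (.lam t1') :=
  h.lift Tm.lam fun _ _ => SR.lamC

theorem reflTransGen_susp (ht : ReflTransGen SR t1 t1') (he : ReflTransGen SRE e1 e1')
    (ol nl : ℕ) : ReflTransGen SR (.susp t1 ol nl e1) (.susp t1' ol nl e1') :=
  (ht.lift (fun x => Tm.susp x ol nl e1) fun _ _ => SR.suspT ol nl e1).trans
    (he.lift (fun x => Tm.susp t1' ol nl x) fun _ _ => SR.suspE t1' ol nl)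

theorem reflTransGen_econs (ht : ReflTransGen SR t1 t1') (he : ReflTransGen SRE e1 e1') (l : ℕ) :
    ReflTransGen SRE (.econs t1 l e1) (.econs t1' l e1') :=
  (ht.lift (fun x => Env.econs x l e1) fun _ _ => SRE.consT l e1).trans
    (he.lift (fun x => Env.econs t1' l x) fun _ _ => SRE.consE t1' l)

theorem reflTransGen_merge (h1 : ReflTransGen SRE e1 e1') (h2 : ReflTransGen SRE e2 e2')
    (nl1 ol2 : ℕ) : ReflTransGen SRE (.merge e1 nl1 ol2 e2) (.merge e1' nl1 ol2 e2') :=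
  (h1.lift (fun x => Env.merge x nl1 ol2 e2) fun _ _ => SRE.mergeL nl1 ol2 e2).trans
    (h2.lift (fun x => Env.merge e1' nl1 ol2 x) fun _ _ => SRE.mergeR e1' nl1 ol2)

end Congruence

def ListEnv.toEnv : ListEnv → Env
  | [] => .nil
  | (t, l) :: E => .econs t l (toEnv E)

theorem reflTransGen_susp_toEnv {a : Tm} {nl : ℕ} {E : ListEnv} :
    a.IsPure → Pure E → ReflTransGen SR (.susp a E.length nl (toEnv E)) (a.subst nl E) := by
  induction a, nl, E using Tm.subst.induct with
  | case1 c nl E => intros; simpa using .single (.r1 c _ nl _)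
  | case2 i nl => rintro ⟨⟩ -; simpa using .single (.r2 i nl ‹_›)
  | case3 nl t l E ih =>
    intro _ hE
    rw [subst_idx_one_cons]
    exact .head (.r3 _ nl t l (toEnv E)) (ih ((pure_cons _ _ _).1 hE).1 pure_nil)
  | case4 i nl t l E hi ih =>
    rintro ⟨⟩ hE
    rw [subst_idx_cons hi]
    exact .head (.r4 i _ nl t l (toEnv E) (by omega))
      (ih (.idx (by omega)) ((pure_cons _ _ _).1 hE).2)
  | case5 a b nl E iha ihb =>
    rintro ⟨⟩ hE
    rw [subst_app]
    exact .head (.r5 a b _ nl (toEnv E)) (reflTransGen_app (iha ‹_› hE) (ihb ‹_› hE))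
  | case6 a nl E ih =>
    rintro ⟨⟩ hE
    rw [subst_lam]
    exact .head (.r6 a _ nl (toEnv E))
      (reflTransGen_lam (ih ‹_› ((pure_cons _ _ _).2 ⟨.idx le_rfl, hE⟩)))
  | case7 => rintro ⟨⟩

theorem reflTransGen_merge_toEnv {E1 E2 : ListEnv} {nl1 o : ℕ} :
    Pure E1 → Ordered E1 → lev E1 ≤ nl1 → Pure E2 → E2.length = o →
    ReflTransGen SRE (.merge (toEnv E1) nl1 o (toEnv E2)) (toEnv (merge E1 nl1 o E2)) := by
  induction E1, nl1, o, E2 using merge.induct with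
  | case1 E1 n o =>
    rintro - - - - rfl
    simpa using .single (.m2 (toEnv E1) n)
  | case2 => intros; simpa [merge_nil_zero] using .single (.m3 _ _)
  | case3 n o x E2 ih =>
    obtain ⟨s, l⟩ := x
    intro _ _ _ h2p ho
    simp only [List.length_cons] at ho
    rw [merge_cons_right_of_lev_lt (Nat.succ_pos n)]
    exact .head (.m4 (n + 1) o s l (toEnv E2) (by omega))
      (ih pure_nil trivial (Nat.zero_le _) ((pure_cons _ _ _).1 h2p).2 (by omega))
  | case4 t E1 n o s l E2 ih =>
    rintro h1p h1o hl1 h2p rfl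
    rw [merge_cons_cons_self]
    exact .head (.m6 t n (toEnv E1) _ s l (toEnv E2)) (reflTransGen_econs
      (reflTransGen_susp_toEnv ((pure_cons _ _ _).1 h1p).1 h2p)
      (ih ((pure_cons _ _ _).1 h1p).2 h1o.2 (h1o.1.trans hl1) h2p rfl) _)
  | case5 t n E1 nl1 o s l E2 h ih =>
    intro h1p h1o hl1 h2p ho
    simp only [lev_cons, List.length_cons] at hl1 ho
    rw [merge_cons_cons_of_ne h]
    exact .head (.m5 t n (toEnv E1) nl1 o s l (toEnv E2) (by omega))
      (ih h1p h1o (by simp only [lev_cons]; omega) ((pure_cons _ _ _).1 h2p).2 (by omega))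

mutual
theorem WfTm.reflTransGen_nf : ∀ {t : Tm}, WfTm t → ReflTransGen SR t t.nf
  | _, .const _ | _, .idx _ _ => .refl
  | _, .app h1 h2 => reflTransGen_app h1.reflTransGen_nf h2.reflTransGen_nf
  | _, .lam h => reflTransGen_lam h.reflTransGen_nf
  | _, .susp ol nl ht he hlen _ => by
    refine (reflTransGen_susp ht.reflTransGen_nf he.reflTransGen_nf ol nl).trans ?_
    rw [← hlen, ← he.nf_wf.2.2.2]
    exact reflTransGen_susp_toEnv ht.isPure_nf he.nf_wf.1

theorem WfEnv.reflTransGen_nf : ∀ {e : Env}, WfEnv e → ReflTransGen SRE e (toEnv e.nf)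
  | _, .nil => .refl
  | _, .econs l ht he _ => reflTransGen_econs ht.reflTransGen_nf he.reflTransGen_nf l
  | _, .merge nl1 ol2 h1 h2 hlev hlen => by
    obtain ⟨hp1, ho1, hlev1, -⟩ := h1.nf_wf
    obtain ⟨hp2, -, -, hlen2⟩ := h2.nf_wf
    exact (reflTransGen_merge h1.reflTransGen_nf h2.reflTransGen_nf nl1 ol2).trans
      (reflTransGen_merge_toEnv hp1 ho1 (hlev1.trans hlev) hp2 (hlen2.trans hlen))
end

theorem SR.reflTransGen_nf {s u : Tm} (h : SR s u) (hs : WfTm s) : ReflTransGen SR u s.nf :=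
  h.nf_eq hs ▸ (h.wfTm hs).reflTransGen_nf

theorem SRE.reflTransGen_nf {s u : Env} (h : SRE s u) (hs : WfEnv s) :
    ReflTransGen SRE u (toEnv s.nf) :=
  h.nf_eq hs ▸ (h.wfEnv hs).reflTransGen_nf

/-- local confluence of the substitution subcalculus: one-step
reading/merging divergences from a well-formed expression can be joined. -/
theorem rm_locally_confluent :
    (∀ s u v : Tm, WfTm s → SR s u → SR s v →
        ∃ t, Relation.ReflTransGen SR u t ∧ Relation.ReflTransGen SR v t) ∧
    (∀ s u v : Env, WfEnv s → SRE s u → SRE s v →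
        ∃ t, Relation.ReflTransGen SRE u t ∧ Relation.ReflTransGen SRE v t) :=
  ⟨fun s _ _ hs hu hv => ⟨s.nf, hu.reflTransGen_nf hs, hv.reflTransGen_nf hs⟩,
    fun s _ _ hs hu hv => ⟨toEnv s.nf, hu.reflTransGen_nf hs, hv.reflTransGen_nf hs⟩⟩
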